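/- Let α, e be epsilon numbers and q, s ordinals less than α⁺ with Ep(q) ∩ α ⊆ e and Ep(s) ∩ α ⊆ e. Then (q + s)[α := e] = q[α := e] + s[α := e] and (q · s)[α := e] = q[α := e] · s[α := e]. -/

import Mathlib

open Ordinal

def IsEps (x : Ordinal.{0}) : Prop := omega0 ^ x = x

noncomputable def nextEps (x : Ordinal.{0}) : Ordinal.{0} := sInf {e | IsEps e ∧ x < e}

inductive InEp : Ordinal.{0} → Ordinal.{0} → Prop
  | self (x : Ordinal.{0}) (h : omega0 ^ x = x) : InEp x x
  | exp (x e c y : Ordinal.{0}) (h : omega0 ^ x ≠ x) (hm : (e, c) ∈ CNF omega0 x)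
      (hy : InEp y e) : InEp y x

/-- The set of epsilon numbers appearing in the iterated Cantor normal form of `x`. -/
def Ep (x : Ordinal.{0}) : Set Ordinal.{0} := {y | InEp y x}

/-- Substitution of the epsilon number `α` by the epsilon number `e` in the
iterated Cantor normal form of `x`. -/
noncomputable def subst (α e : Ordinal.{0}) (x : Ordinal.{0}) : Ordinal.{0} :=
  if h : omega0 ^ x = x then (if x = α then e else x)
  else ((CNF omega0 x).attach.map (fun p => omega0 ^ (subst α e p.1.1) * p.1.2)).sum
termination_by x
decreasing_by
  have hx0 : x ≠ 0 := by
    rintro rfl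
    have := p.2
    simp [Ordinal.CNF.zero_right] at this
  have hle := Ordinal.CNF.fst_le_log p.2
  have hlt : Ordinal.log omega0 x < x := by
    have h1 : x < omega0 ^ x :=
      lt_of_le_of_ne (Ordinal.right_le_opow x one_lt_omega0) (Ne.symm h)
    exact (Ordinal.lt_opow_iff_log_lt one_lt_omega0 hx0).mp h1
  exact lt_of_le_of_lt hle hlt

/-!
Write a nonzero ordinal in `ω`-normal form `ω ^ a * c + t` with `0 < c < ω` and `t < ω ^ a`.
Substitution acts on such a form termwise, `x[α := e] = ω ^ a[α := e] * c + t[α := e]`, and it is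
strictly increasing on the `Admissible` ordinals, those satisfying the hypotheses on `q` and `s`.
Below an epsilon number `ε ≤ α` this holds because `ε[α := e]` is again an epsilon number, hence
closed under `ω ^ ·`, `*` and `+`, while admissibility puts the epsilon numbers below `α` of the
smaller ordinal under `e`. Monotonicity keeps
`t[α := e] < ω ^ a[α := e]`, so images of normal forms are normal forms, and the normal-form
recursions for `+` (absorption of smaller leading terms) and for `*`
(`(ω ^ a * c + t) * ω ^ b = ω ^ (a + b)` for `b ≠ 0`, `(ω ^ a * c + t) * n = ω ^ a * (c * n) + t`
for finite `n ≠ 0`) hold on both sides.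
-/

section OrdinalArithmetic

variable {a b c d t u : Ordinal}

lemma exists_omega0_opow_mul_add {x : Ordinal} (hx : x ≠ 0) :
    ∃ a c t : Ordinal, c ≠ 0 ∧ c < ω ∧ t < ω ^ a ∧ ω ^ a * c + t = x :=
  ⟨log ω x, x / ω ^ log ω x, x % ω ^ log ω x, (div_opow_log_pos ω hx).ne',
    div_opow_log_lt x one_lt_omega0, mod_lt _ (opow_ne_zero _ omega0_ne_zero), div_add_mod _ _⟩

lemma log_omega0_opow_mul_add (hc0 : c ≠ 0) (hc : c < ω) (ht : t < ω ^ a) :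
    log ω (ω ^ a * c + t) = a := by
  rw [log_opow_mul_add one_lt_omega0 hc0 ht, log_eq_zero hc, add_zero]

lemma omega0_opow_mul_add_div (ht : t < ω ^ a) : (ω ^ a * c + t) / ω ^ a = c := by
  rw [mul_add_div _ (opow_ne_zero _ omega0_ne_zero), div_eq_zero_of_lt ht, add_zero]

lemma omega0_opow_le_opow_mul_add (hc0 : c ≠ 0) : ω ^ a ≤ ω ^ a * c + t :=
  (le_mul_left _ (pos_iff_ne_zero.2 hc0)).trans le_self_add

lemma lex_lt_of_omega0_opow_mul_add_lt (hc0 : c ≠ 0) (hc : c < ω) (ht : t < ω ^ a)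
    (hd0 : d ≠ 0) (hd : d < ω) (hu : u < ω ^ b) (h : ω ^ a * c + t < ω ^ b * d + u) :
    a < b ∨ a = b ∧ c < d ∨ a = b ∧ c = d ∧ t < u := by
  have hab : a ≤ b := by
    simpa only [log_omega0_opow_mul_add hc0 hc ht, log_omega0_opow_mul_add hd0 hd hu]
      using log_mono_right ω h.le
  obtain hab | rfl := hab.lt_or_eq
  · exact Or.inl hab
  have hcd : c ≤ d := by
    simpa only [omega0_opow_mul_add_div ht, omega0_opow_mul_add_div hu] using
      div_le_left h.le (ω ^ a)
  obtain hcd | rfl := hcd.lt_or_eq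
  · exact Or.inr (Or.inl ⟨rfl, hcd⟩)
  · exact Or.inr (Or.inr ⟨rfl, rfl, (add_lt_add_iff_left _).1 h⟩)

lemma omega0_opow_mul_add_add (ht : t < ω ^ a) (hd0 : d ≠ 0) :
    ω ^ a * c + t + (ω ^ a * d + u) = ω ^ a * (c + d) + u := by
  rw [add_assoc, ← add_assoc t, add_of_omega0_opow_le ht (le_mul_left _ (pos_iff_ne_zero.2 hd0)),
    ← add_assoc, mul_add]

lemma omega0_opow_mul_add_mul_of_lt_omega0 (hc0 : c ≠ 0) (ht : t < ω ^ a) (hd0 : d ≠ 0)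
    (hd : d < ω) : (ω ^ a * c + t) * d = ω ^ a * (c * d) + t := by
  obtain ⟨n, rfl⟩ := lt_omega0.1 hd
  have hn : 1 ≤ n := Nat.one_le_iff_ne_zero.2 (by rintro rfl; exact hd0 Nat.cast_zero)
  induction n, hn using Nat.le_induction with
  | base => simp
  | succ n hn ih =>
    rw [Nat.cast_succ, mul_add_one, ih (by simp; omega) (natCast_lt_omega0 n), mul_add_one,
      omega0_opow_mul_add_add ht hc0, ← mul_add_one]

lemma omega0_opow_mul_add_mul_opow (hc0 : c ≠ 0) (hc : c < ω) (ht : t < ω ^ a) (hb : b ≠ 0) :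
    (ω ^ a * c + t) * ω ^ b = ω ^ (a + b) := by
  refine le_antisymm ?_ ?_
  · have hω : ω ∣ ω ^ b := by
      simpa only [opow_one] using opow_dvd_opow ω (Order.one_le_iff_ne_zero.2 hb)
    calc (ω ^ a * c + t) * ω ^ b ≤ ω ^ a * (c + 1) * ω ^ b := by
          gcongr
          rw [mul_add_one]
          exact (add_lt_add_iff_left _).2 ht |>.le
      _ = ω ^ (a + b) := by
          rw [mul_assoc, mul_omega0_dvd (by simp) (isPrincipal_add_omega0 hc one_lt_omega0) hω,
            opow_add]
  · rw [opow_add]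
    exact mul_le_mul_left (omega0_opow_le_opow_mul_add hc0) _

lemma omega0_opow_mul_add_mul_opow_mul_add (hc0 : c ≠ 0) (hc : c < ω) (ht : t < ω ^ a)
    (hb : b ≠ 0) : (ω ^ a * c + t) * (ω ^ b * d + u) = ω ^ (a + b) * d + (ω ^ a * c + t) * u := by
  rw [mul_add, ← mul_assoc, omega0_opow_mul_add_mul_opow hc0 hc ht hb]

end OrdinalArithmetic

lemma CNF_omega0_of_isEps {x : Ordinal} (hx : IsEps x) : CNF ω x = [(x, 1)] := by
  have hx : ω ^ x = x := hx
  simpa [hx, CNF.zero_right] using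
    CNF.opow_mul_add one_lt_omega0 one_ne_zero one_lt_omega0 (opow_pos x omega0_pos)

lemma Ep_eq_biUnion_CNF (x : Ordinal) : Ep x = ⋃ p ∈ CNF ω x, Ep p.1 := by
  by_cases hx : IsEps x
  · simp [CNF_omega0_of_isEps hx]
  ext y
  simp only [Set.mem_iUnion, exists_prop]
  constructor
  · rintro (_ | ⟨_, e, c, _, _, hm, hy⟩)
    · exact absurd ‹_› hx
    · exact ⟨(e, c), hm, hy⟩
  · rintro ⟨⟨e, c⟩, hm, hy⟩
    exact InEp.exp x e c y hx hm hy

lemma Ep_zero : Ep 0 = ∅ := by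
  simp [Ep_eq_biUnion_CNF 0, CNF.zero_right]

lemma Ep_omega0_opow_mul_add {a c t : Ordinal} (hc0 : c ≠ 0) (hc : c < ω) (ht : t < ω ^ a) :
    Ep (ω ^ a * c + t) = Ep a ∪ Ep t := by
  rw [Ep_eq_biUnion_CNF, CNF.opow_mul_add one_lt_omega0 hc0 hc ht, Ep_eq_biUnion_CNF t]
  simp

lemma Ep_omega0_opow (a : Ordinal) : Ep (ω ^ a) = Ep a := by
  simpa [Ep_zero] using Ep_omega0_opow_mul_add one_ne_zero one_lt_omega0 (opow_pos a omega0_pos)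

section Subst

variable {α e : Ordinal.{0}}

lemma subst_of_isEps {x : Ordinal.{0}} (hx : IsEps x) : subst α e x = if x = α then e else x := by
  rw [subst]
  exact dif_pos hx

lemma subst_of_not_isEps {x : Ordinal.{0}} (hx : ¬IsEps x) :
    subst α e x = ((CNF ω x).map fun p => ω ^ subst α e p.1 * p.2).sum := by
  rw [subst, dif_neg (show ¬ω ^ x = x from hx)]
  exact congrArg List.sum
    (List.attach_map_val (f := fun p : Ordinal × Ordinal => ω ^ subst α e p.1 * p.2))

@[simp]
lemma subst_zero : subst α e 0 = 0 := by
  simp [subst_of_not_isEps (x := 0) (by simp [IsEps]), CNF.zero_right]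

lemma IsEps.subst (he : IsEps e) {x : Ordinal.{0}} (hx : IsEps x) : IsEps (subst α e x) := by
  rw [subst_of_isEps hx]
  split_ifs
  exacts [he, hx]

lemma subst_eq_sum_CNF (he : IsEps e) (x : Ordinal.{0}) :
    subst α e x = ((CNF ω x).map fun p => ω ^ subst α e p.1 * p.2).sum := by
  by_cases hx : IsEps x
  · simpa [CNF_omega0_of_isEps hx] using (he.subst hx).symm
  · exact subst_of_not_isEps hx

lemma subst_omega0_opow_mul_add (he : IsEps e) {a c t : Ordinal.{0}} (hc0 : c ≠ 0) (hc : c < ω)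
    (ht : t < ω ^ a) : subst α e (ω ^ a * c + t) = ω ^ subst α e a * c + subst α e t := by
  rw [subst_eq_sum_CNF he, CNF.opow_mul_add one_lt_omega0 hc0 hc ht, List.map_cons,
    List.sum_cons, ← subst_eq_sum_CNF he]

lemma subst_omega0_opow (he : IsEps e) (a : Ordinal.{0}) :
    subst α e (ω ^ a) = ω ^ subst α e a := by
  simpa using
    subst_omega0_opow_mul_add (α := α) he one_ne_zero one_lt_omega0 (opow_pos a omega0_pos)

lemma subst_of_lt_omega0 (he : IsEps e) {n : Ordinal.{0}} (hn : n < ω) : subst α e n = n := by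
  rcases eq_or_ne n 0 with rfl | hn0
  · exact subst_zero
  · simpa using subst_omega0_opow_mul_add (α := α) he hn0 hn (opow_pos 0 omega0_pos)

lemma subst_ne_zero (he : IsEps e) {x : Ordinal.{0}} (hx : x ≠ 0) : subst α e x ≠ 0 := by
  obtain ⟨a, c, t, hc0, hc, ht, rfl⟩ := exists_omega0_opow_mul_add hx
  rw [subst_omega0_opow_mul_add he hc0 hc ht]
  exact (opow_mul_add_pos omega0_ne_zero _ hc0 _).ne'

end Subst

lemma IsEps.le_of_lt_nextEps {x α : Ordinal.{0}} (hx : IsEps x) (h : x < nextEps α) : x ≤ α := by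
  by_contra! hαx
  exact h.not_ge (csInf_le (OrderBot.bddBelow _) ⟨hx, hαx⟩)

lemma lt_of_omega0_opow_le_of_not_isEps {a x : Ordinal} (h : ω ^ a ≤ x) (hx : ¬IsEps x) : a < x :=
  (opow_lt_opow_iff_right one_lt_omega0).1 <|
    h.trans_lt ((right_le_opow x one_lt_omega0).lt_of_ne (Ne.symm hx))

def Admissible (α e x : Ordinal.{0}) : Prop := x < nextEps α ∧ Ep x ∩ Set.Iio α ⊆ Set.Iio e

namespace Admissible

variable {α e x : Ordinal.{0}}

lemma of_le (hx : Admissible α e x) {y : Ordinal.{0}} (hyx : y ≤ x) (hEp : Ep y ⊆ Ep x) :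
    Admissible α e y :=
  ⟨hyx.trans_lt hx.1, fun _ hz => hx.2 ⟨hEp hz.1, hz.2⟩⟩

lemma exists_omega0_opow_mul_add (hx : Admissible α e x) (hx0 : x ≠ 0) :
    ∃ a c t : Ordinal, c ≠ 0 ∧ c < ω ∧ t < ω ^ a ∧ ω ^ a * c + t = x ∧
      Admissible α e a ∧ Admissible α e t ∧ Admissible α e (ω ^ a) := by
  obtain ⟨a, c, t, hc0, hc, ht, rfl⟩ := _root_.exists_omega0_opow_mul_add hx0
  have hlead := omega0_opow_le_opow_mul_add (a := a) (t := t) hc0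
  have hEp := Ep_omega0_opow_mul_add hc0 hc ht
  refine ⟨a, c, t, hc0, hc, ht, rfl, hx.of_le ((right_le_opow a one_lt_omega0).trans hlead) ?_,
    hx.of_le (ht.le.trans hlead) ?_, hx.of_le hlead ?_⟩
  all_goals simp [hEp, Ep_omega0_opow]

end Admissible

section StrictMono

variable {α e : Ordinal.{0}}

lemma subst_lt_subst_of_isEps (he : IsEps e) {x : Ordinal.{0}} (hx : IsEps x)
    (hxα : x < nextEps α) {z : Ordinal.{0}} (hz : Admissible α e z) (hzx : z < x) :
    subst α e z < subst α e x := by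
  have hSx : ω ^ subst α e x = subst α e x := he.subst hx
  induction z using WellFoundedLT.induction with | ind z ih => ?_
  by_cases hzε : IsEps z
  · have hzα : z < α := hzx.trans_le (hx.le_of_lt_nextEps hxα)
    have hze : z < e := hz.2 ⟨InEp.self z hzε, hzα⟩
    rw [subst_of_isEps hzε, if_neg hzα.ne, subst_of_isEps hx]
    split_ifs <;> assumption
  rcases eq_or_ne z 0 with rfl | hz0
  · simpa [pos_iff_ne_zero] using subst_ne_zero he hzx.ne'
  obtain ⟨a, c, t, hc0, hc, ht, rfl, ha, ht', -⟩ := hz.exists_omega0_opow_mul_add hz0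
  have hlead := omega0_opow_le_opow_mul_add (a := a) (t := t) hc0
  have haz := lt_of_omega0_opow_le_of_not_isEps hlead hzε
  have htz := ht.trans_le hlead
  have hSa := ih a haz ha (haz.trans hzx)
  have hSt := ih t htz ht' (htz.trans hzx)
  rw [← hSx] at hSt
  rw [subst_omega0_opow_mul_add he hc0 hc ht, ← hSx]
  exact isPrincipal_add_omega0_opow _ (opow_mul_lt_opow hc hSa) hSt

theorem subst_strictMonoOn (he : IsEps e) : StrictMonoOn (subst α e) {x | Admissible α e x} := by
  intro y hy x hx hyx
  induction x using WellFoundedLT.induction generalizing y with | ind x ih => ?_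
  by_cases hxε : IsEps x
  · exact subst_lt_subst_of_isEps he hxε hx.1 hy hyx
  rcases eq_or_ne y 0 with rfl | hy0
  · simpa [pos_iff_ne_zero] using subst_ne_zero he hyx.ne'
  obtain ⟨b, d, u, hd0, hd, hu, rfl, hb, hu', -⟩ := hx.exists_omega0_opow_mul_add hyx.ne_bot
  obtain ⟨a, c, t, hc0, hc, ht, rfl, ha, ht', hωa⟩ := hy.exists_omega0_opow_mul_add hy0
  have hxlead := omega0_opow_le_opow_mul_add (a := b) (t := u) hd0
  have hSt : subst α e t < ω ^ subst α e a := by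
    simpa only [subst_omega0_opow he] using
      ih _ ((omega0_opow_le_opow_mul_add hc0).trans_lt hyx) ht' hωa ht
  rw [subst_omega0_opow_mul_add he hc0 hc ht, subst_omega0_opow_mul_add he hd0 hd hu]
  rcases lex_lt_of_omega0_opow_mul_add_lt hc0 hc ht hd0 hd hu hyx with
    hab | ⟨rfl, hcd⟩ | ⟨rfl, rfl, htu⟩
  · have hSab := ih b (lt_of_omega0_opow_le_of_not_isEps hxlead hxε) ha hb hab
    exact (opow_mul_add_lt_opow hc hSt hSab).trans_le (omega0_opow_le_opow_mul_add hd0)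
  · exact (opow_mul_add_lt_opow_mul hSt hcd).trans_le le_self_add
  · exact (add_lt_add_iff_left _).2 (ih u (hu.trans_le hxlead) ht' hu' htu)

end StrictMono

section Arithmetic

variable {α e : Ordinal.{0}}

lemma subst_lt_omega0_opow_subst (he : IsEps e) {a t : Ordinal.{0}}
    (ha : Admissible α e (ω ^ a)) (ht : Admissible α e t) (hta : t < ω ^ a) :
    subst α e t < ω ^ subst α e a := by
  simpa only [subst_omega0_opow he] using subst_strictMonoOn he ht ha hta

theorem subst_add (he : IsEps e) {q s : Ordinal.{0}} (hq : Admissible α e q)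
    (hs : Admissible α e s) : subst α e (q + s) = subst α e q + subst α e s := by
  induction q using WellFoundedLT.induction with | ind q ih => ?_
  rcases eq_or_ne q 0 with rfl | hq0
  · simp
  rcases eq_or_ne s 0 with rfl | hs0
  · simp
  obtain ⟨a, c, t, hc0, hc, ht, rfl, ha, ht', hωa⟩ := hq.exists_omega0_opow_mul_add hq0
  obtain ⟨b, d, u, hd0, hd, hu, rfl, hb, -, -⟩ := hs.exists_omega0_opow_mul_add hs0
  have hSt := subst_lt_omega0_opow_subst he hωa ht' ht
  rw [subst_omega0_opow_mul_add he hc0 hc ht, subst_omega0_opow_mul_add he hd0 hd hu]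
  rcases lt_trichotomy a b with hab | rfl | hba
  · have hSab := subst_strictMonoOn he ha hb hab
    rw [add_of_omega0_opow_le (opow_mul_add_lt_opow hc ht hab) (omega0_opow_le_opow_mul_add hd0),
      add_of_omega0_opow_le (opow_mul_add_lt_opow hc hSt hSab) (omega0_opow_le_opow_mul_add hd0),
      subst_omega0_opow_mul_add he hd0 hd hu]
  · rw [omega0_opow_mul_add_add ht hd0, omega0_opow_mul_add_add hSt hd0,
      subst_omega0_opow_mul_add he (by simp [hc0]) (isPrincipal_add_omega0 hc hd) hu]
  · have hsa : ω ^ b * d + u < ω ^ a := opow_mul_add_lt_opow hd hu hba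
    have htq : t < ω ^ a * c + t := ht.trans_le (omega0_opow_le_opow_mul_add hc0)
    rw [add_assoc, subst_omega0_opow_mul_add he hc0 hc (isPrincipal_add_omega0_opow a ht hsa),
      ih t htq ht', subst_omega0_opow_mul_add he hd0 hd hu, add_assoc]

theorem subst_mul (he : IsEps e) {q s : Ordinal.{0}} (hq : Admissible α e q)
    (hs : Admissible α e s) : subst α e (q * s) = subst α e q * subst α e s := by
  induction s using WellFoundedLT.induction with | ind s ih => ?_
  rcases eq_or_ne q 0 with rfl | hq0
  · simp
  rcases eq_or_ne s 0 with rfl | hs0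
  · simp
  obtain ⟨a, c, t, hc0, hc, ht, rfl, ha, ht', hωa⟩ := hq.exists_omega0_opow_mul_add hq0
  obtain ⟨b, d, u, hd0, hd, hu, rfl, hb, hu', -⟩ := hs.exists_omega0_opow_mul_add hs0
  have hSt := subst_lt_omega0_opow_subst he hωa ht' ht
  rcases eq_or_ne b 0 with rfl | hb0
  · obtain rfl : u = 0 := by simpa using hu
    have hcd : c * d < ω := isPrincipal_mul_omega0 hc hd
    simp only [opow_zero, one_mul, add_zero]
    rw [omega0_opow_mul_add_mul_of_lt_omega0 hc0 ht hd0 hd,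
      subst_omega0_opow_mul_add he (mul_ne_zero hc0 hd0) hcd ht, subst_of_lt_omega0 he hd,
      subst_omega0_opow_mul_add he hc0 hc ht, omega0_opow_mul_add_mul_of_lt_omega0 hc0 hSt hd0 hd]
  · have hqu : (ω ^ a * c + t) * u < ω ^ (a + b) := by
      rw [← omega0_opow_mul_add_mul_opow hc0 hc ht hb0]
      exact (mul_lt_mul_iff_of_pos_left (opow_mul_add_pos omega0_ne_zero a hc0 t)).2 hu
    have hus : u < ω ^ b * d + u := hu.trans_le (omega0_opow_le_opow_mul_add hd0)
    rw [omega0_opow_mul_add_mul_opow_mul_add hc0 hc ht hb0, subst_omega0_opow_mul_add he hd0 hd hqu,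
      ih u hus hu', subst_add he ha hb, subst_omega0_opow_mul_add he hd0 hd hu,
      subst_omega0_opow_mul_add he hc0 hc ht,
      omega0_opow_mul_add_mul_opow_mul_add hc0 hc hSt (subst_ne_zero he hb0)]

end Arithmetic

theorem subst_add_mul_general (α e q s : Ordinal.{0}) (he : IsEps e)
    (hq : q < nextEps α) (hs : s < nextEps α)
    (hqe : Ep q ∩ Set.Iio α ⊆ Set.Iio e) (hse : Ep s ∩ Set.Iio α ⊆ Set.Iio e) :
    subst α e (q + s) = subst α e q + subst α e s ∧
      subst α e (q * s) = subst α e q * subst α e s :=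
  ⟨subst_add he ⟨hq, hqe⟩ ⟨hs, hse⟩, subst_mul he ⟨hq, hqe⟩ ⟨hs, hse⟩⟩

/-- The substitution x ↦ x[α := e] commutes with ordinal addition and
multiplication on ordinals below α⁺ whose epsilon numbers below α lie below e. -/
theorem subst_add_mul (α e q s : Ordinal.{0}) (hα : IsEps α) (he : IsEps e)
    (hq : q < nextEps α) (hs : s < nextEps α)
    (hqe : Ep q ∩ Set.Iio α ⊆ Set.Iio e) (hse : Ep s ∩ Set.Iio α ⊆ Set.Iio e) :
    subst α e (q + s) = subst α e q + subst α e s ∧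
      subst α e (q * s) = subst α e q * subst α e s :=
  subst_add_mul_general α e q s he hq hs hqe hse
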